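/- Let k be a field and let A : Fin n → (Fin (d+1) → ℤ) be a finite point configuration. Then the ideal of MvPolynomial (Fin n) k generated by the binomials X^u − X^v, where u, v : Fin n →₀ ℕ satisfy ∑_i u_i • A i = ∑_i v_i • A i, is a prime ideal. Equivalently, the kernel of the k-algebra homomorphism MvPolynomial (Fin n) k →ₐ[k] AddMonoidAlgebra k (Fin (d+1) → ℤ) sending X_i to the Laurent monomial with exponent A i is a prime ideal. -/

import Mathlib

/-!
Sending `X i` to `y ^ A i` is the map `k[ℕⁿ] → k[ℤ^(d+1)]` induced on monoid algebras by the
monoid hom `u ↦ ∑ i, u i • A i`, so its kernel is prime because `k[ℤ^(d+1)]` is a domain.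
The kernel of the map induced by any `f : M → N` is spanned by the binomials
`single a 1 - single b 1` with `f a = f b`: if `g` sends each point to a fixed representative of
its fibre, then `mapDomain g x = 0` for `x` in the kernel, and `x - mapDomain g x` is visibly a
combination of such binomials.
-/

namespace AddMonoidAlgebra

variable {R M N : Type*} [Ring R]

theorem mem_span_single_sub_single_of_mapDomain_eq_zero {f : M → N} {x : R[M]}
    (hx : mapDomain f x = 0) :
    x ∈ Submodule.span R {y : R[M] | ∃ a b, f a = f b ∧ y = single a 1 - single b 1} := by
  rcases isEmpty_or_nonempty M with hM | hM
  · have : x = 0 := by ext a; exact isEmptyElim a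
    simp [this]
  set g : M → M := Function.invFun f ∘ f
  have hfg : ∀ a, f (g a) = f a := fun a => Function.invFun_eq ⟨a, rfl⟩
  have hgx : mapDomain g x = 0 := by
    have : mapDomain g x = mapDomain (Function.invFun f) (mapDomain f x) := by
      ext; simp [Finsupp.mapDomain_comp, g]
    rw [this, hx, mapDomain_zero]
  have hdecomp :
      x - mapDomain g x = x.coeff.sum fun a c => c • (single a 1 - single (g a) 1) := by
    conv_lhs => rw [← sum_coeff_single x, mapDomain_sum, ← Finsupp.sum_sub]
    refine Finsupp.sum_congr fun a _ => ?_
    rw [mapDomain_single, smul_sub, smul_single', smul_single', mul_one]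
  rw [← sub_zero x, ← hgx, hdecomp]
  exact Submodule.finsuppSum_mem _ _ _ _ fun a _ =>
    Submodule.smul_mem _ _ (Submodule.subset_span ⟨a, g a, (hfg a).symm, rfl⟩)

theorem ker_mapDomainRingHom [AddMonoid M] [AddMonoid N] (f : M →+ N) :
    RingHom.ker (mapDomainRingHom R f) =
      Ideal.span {y : R[M] | ∃ a b, f a = f b ∧ y = single a 1 - single b 1} := by
  refine le_antisymm (fun x hx => ?_) (Ideal.span_le.mpr ?_)
  · exact Submodule.span_le_restrictScalars R _ _
      (mem_span_single_sub_single_of_mapDomain_eq_zero (RingHom.mem_ker.mp hx))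
  · rintro _ ⟨a, b, hab, rfl⟩
    rw [SetLike.mem_coe, RingHom.mem_ker, map_sub]
    simp [hab]

end AddMonoidAlgebra

namespace MvPolynomial

theorem coe_aeval_single_eq_mapDomainRingHom {σ R M : Type*} [CommSemiring R]
    [AddCommMonoid M] (w : σ → M) :
    (aeval (R := R) fun i => AddMonoidAlgebra.single (w i) (1 : R) :
      MvPolynomial σ R →+* AddMonoidAlgebra R M) =
      AddMonoidAlgebra.mapDomainRingHom R (Finsupp.weight w) := by
  refine ringHom_ext (fun r => ?_) (fun i => ?_)
  · rw [RingHom.coe_coe, aeval_C]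
    simp [C_apply, ← single_eq_monomial, AddMonoidAlgebra.coe_algebraMap]
  · rw [RingHom.coe_coe, aeval_X]
    simp [X, ← single_eq_monomial, Finsupp.weight_single]

end MvPolynomial

open MvPolynomial in
/-- The toric ideal of a point configuration `A : Fin n → (Fin (d+1) → ℤ)` is prime: the
binomial ideal `⟨X^u − X^v : A u = A v⟩` is a prime ideal; equivalently, the kernel of the
`k`-algebra map `k[x_1,…,x_n] → k[y^{±}]`, `X i ↦ y^{A i}`, is a prime ideal. -/
theorem toric_ideal_isPrime (k : Type*) [Field k] (n d : ℕ)
    (A : Fin n → (Fin (d + 1) → ℤ)) :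
    (Ideal.span {f : MvPolynomial (Fin n) k |
      ∃ u v : Fin n →₀ ℕ,
        (∑ i, u i • A i) = (∑ i, v i • A i) ∧
        f = MvPolynomial.monomial u (1 : k) - MvPolynomial.monomial v (1 : k)}).IsPrime ∧
    (RingHom.ker (MvPolynomial.aeval
        (fun i : Fin n => AddMonoidAlgebra.single (A i) (1 : k)) :
      MvPolynomial (Fin n) k →ₐ[k] AddMonoidAlgebra k (Fin (d + 1) → ℤ))).IsPrime := by
  have hker : RingHom.ker (aeval fun i => AddMonoidAlgebra.single (A i) (1 : k)) =
      Ideal.span {f : MvPolynomial (Fin n) k | ∃ u v : Fin n →₀ ℕ,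
        (∑ i, u i • A i) = (∑ i, v i • A i) ∧ f = monomial u 1 - monomial v 1} := by
    rw [← RingHom.ker_coe_toRingHom, coe_aeval_single_eq_mapDomainRingHom,
      AddMonoidAlgebra.ker_mapDomainRingHom]
    simp only [Finsupp.weight_apply, Finsupp.sum_fintype, zero_smul, implies_true,
      single_eq_monomial]
  have hprime := RingHom.ker_isPrime (aeval (R := k) fun i => AddMonoidAlgebra.single (A i) (1 : k))
  rw [← hker]
  exact ⟨hprime, hprime⟩
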